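/- Suppose each f_k is μ-strongly convex (μ ≥ 0) with L-Lipschitz gradient, g is ν-strongly convex (ν ≥ 0), and the update satisfies -Σ_k ρ_k^{(t)}(∇f_k(Θ^{(t)}) + η^{(t)}) = ℓ(Θ^{(t+1)} - Θ^{(t)}) for some η^{(t)} ∈ ∂g(Θ^{(t+1)}) and ρ^{(t)} in the simplex. Then for all Θ in the feasible convex set and ℓ > L: Σ_k ρ_k^{(t)}(F_k(Θ^{(t+1)}) - F_k(Θ)) ≤ (ℓ/2)(‖Θ^{(t)} - Θ‖_F² - ‖Θ^{(t+1)} - Θ‖_F²) - (ν/2)‖Θ^{(t+1)} - Θ‖_F² - (μ/2)‖Θ^{(t)} - Θ‖_F². -/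

import Mathlib

/-! For each `k`, the descent lemma bounds `f_k(Θᵗ⁺¹)` by the linearization of `f_k` at `Θᵗ` plus
`(L/2)‖Θᵗ⁺¹ - Θᵗ‖²`, while strong convexity bounds `f_k(Θ)` and `g(Θ)` from below by the
linearizations at `Θᵗ` and at `Θᵗ⁺¹` (through the subgradient `η`) plus `(μ/2)‖Θᵗ - Θ‖²` and
`(ν/2)‖Θᵗ⁺¹ - Θ‖²`. The linear terms combine into `⟪∇f_k(Θᵗ) + η, Θᵗ⁺¹ - Θ⟫`; averaging over
`ρ`, the update rule turns them into `-ℓ⟪Θᵗ⁺¹ - Θᵗ, Θᵗ⁺¹ - Θ⟫`, and since `L < ℓ` the polarization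
identity `‖Θᵗ - Θ‖² - ‖Θᵗ⁺¹ - Θ‖² = ‖Θᵗ⁺¹ - Θᵗ‖² - 2⟪Θᵗ⁺¹ - Θᵗ, Θᵗ⁺¹ - Θ⟫` finishes the estimate. -/

open Matrix
open scoped NNReal

attribute [local instance] Matrix.frobeniusNormedAddCommGroup Matrix.frobeniusNormedSpace

open Filter Set Topology

section StrongConvexity

variable {E : Type*} [NormedAddCommGroup E] [NormedSpace ℝ E] {s : Set E} {μ : ℝ} {f : E → ℝ}
  {x y : E}

theorem StrongConvexOn.slope_le (hf : StrongConvexOn s μ f) (hx : x ∈ s) (hy : y ∈ s) {t : ℝ}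
    (ht : t ∈ Ioo 0 1) :
    t⁻¹ * (f (x + t • (y - x)) - f x) ≤ f y - f x - μ / 2 * (1 - t) * ‖y - x‖ ^ 2 := by
  obtain ⟨ht0, ht1⟩ := ht
  have h := hf.2 hx hy (sub_nonneg.2 ht1.le) ht0.le (sub_add_cancel 1 t)
  rw [show (1 - t) • x + t • y = x + t • (y - x) by module, norm_sub_rev] at h
  rw [inv_mul_le_iff₀ ht0]
  simp only [smul_eq_mul] at h
  linarith

theorem StrongConvexOn.add_le_of_tendsto_le_slope (hf : StrongConvexOn s μ f) (hx : x ∈ s)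
    (hy : y ∈ s) {σ : ℝ → ℝ} {D : ℝ} (hσ : Tendsto σ (𝓝[>] 0) (𝓝 D))
    (hσ_le : ∀ t ∈ Ioo (0 : ℝ) 1, σ t ≤ t⁻¹ * (f (x + t • (y - x)) - f x)) :
    f x + D + μ / 2 * ‖y - x‖ ^ 2 ≤ f y := by
  have hbound : Tendsto (fun t : ℝ ↦ f y - f x - μ / 2 * (1 - t) * ‖y - x‖ ^ 2) (𝓝[>] 0)
      (𝓝 (f y - f x - μ / 2 * (1 - 0) * ‖y - x‖ ^ 2)) :=
    (Continuous.tendsto (by fun_prop) 0).mono_left nhdsWithin_le_nhds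
  have := le_of_tendsto_of_tendsto hσ hbound <| by
    filter_upwards [Ioo_mem_nhdsGT (zero_lt_one' ℝ)] with t ht
    exact (hσ_le t ht).trans (hf.slope_le hx hy ht)
  linarith

theorem StrongConvexOn.add_fderiv_add_le (hf : StrongConvexOn s μ f) (hx : x ∈ s) (hy : y ∈ s)
    (hfx : DifferentiableAt ℝ f x) :
    f x + fderiv ℝ f x (y - x) + μ / 2 * ‖y - x‖ ^ 2 ≤ f y :=
  hf.add_le_of_tendsto_le_slope hx hy
    (hfx.hasFDerivAt.hasLineDerivAt (y - x)).tendsto_slope_zero_right fun _ _ ↦ le_rfl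

theorem StrongConvexOn.add_subgradient_add_le (hf : StrongConvexOn s μ f) (hx : x ∈ s)
    (hy : y ∈ s) (e : E →ₗ[ℝ] ℝ) (he : ∀ z ∈ s, f x + e (z - x) ≤ f z) :
    f x + e (y - x) + μ / 2 * ‖y - x‖ ^ 2 ≤ f y := by
  refine hf.add_le_of_tendsto_le_slope hx hy tendsto_const_nhds fun t ⟨ht0, ht1⟩ ↦ ?_
  have hmem : x + t • (y - x) ∈ s := by
    simpa [show (1 - t) • x + t • y = x + t • (y - x) by module] using
      hf.1 hx hy (sub_nonneg.2 ht1.le) ht0.le (sub_add_cancel 1 t)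
  have := he _ hmem
  rw [add_sub_cancel_left, map_smul, smul_eq_mul] at this
  rw [le_inv_mul_iff₀ ht0]
  linarith

theorem apply_le_add_fderiv_add_of_lipschitzWith_fderiv (hf : Differentiable ℝ f) {L : ℝ≥0}
    (hlip : LipschitzWith L (fderiv ℝ f)) (x y : E) :
    f y ≤ f x + fderiv ℝ f x (y - x) + L / 2 * ‖y - x‖ ^ 2 := by
  set d := y - x
  have hline : ∀ t : ℝ, HasDerivAt (fun t ↦ f (x + t • d)) (fderiv ℝ f (x + t • d) d) t :=
    fun t ↦ (hf _).hasFDerivAt.comp_hasDerivAt t <| by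
      simpa using ((hasDerivAt_id t).smul_const d).const_add x
  have hslope : ∀ t ∈ Ico (0 : ℝ) 1,
      fderiv ℝ f (x + t • d) d ≤ fderiv ℝ f x d + L * t * ‖d‖ ^ 2 := by
    intro t ⟨ht0, _⟩
    have hdist : ‖fderiv ℝ f (x + t • d) - fderiv ℝ f x‖ ≤ L * (t * ‖d‖) := by
      simpa [dist_eq_norm, norm_smul, abs_of_nonneg ht0] using hlip.dist_le_mul (x + t • d) x
    calc fderiv ℝ f (x + t • d) d
        = fderiv ℝ f x d + (fderiv ℝ f (x + t • d) - fderiv ℝ f x) d := by simp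
      _ ≤ fderiv ℝ f x d + ‖fderiv ℝ f (x + t • d) - fderiv ℝ f x‖ * ‖d‖ := by
        gcongr
        exact (le_abs_self _).trans <| by
          simpa using (fderiv ℝ f (x + t • d) - fderiv ℝ f x).le_opNorm d
      _ ≤ fderiv ℝ f x d + L * (t * ‖d‖) * ‖d‖ := by gcongr
      _ = fderiv ℝ f x d + L * t * ‖d‖ ^ 2 := by ring
  have := image_le_of_deriv_right_le_deriv_boundary
    (B := fun t ↦ f x + t * fderiv ℝ f x d + L / 2 * t ^ 2 * ‖d‖ ^ 2)
    (fun t _ ↦ (hline t).continuousAt.continuousWithinAt) (fun t _ ↦ (hline t).hasDerivWithinAt)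
    (by simp) (by fun_prop) (fun t _ ↦ ?_) hslope (right_mem_Icc.2 zero_le_one)
  · simpa [d] using this
  · have hB : HasDerivAt (fun t : ℝ ↦ f x + t * fderiv ℝ f x d + L / 2 * t ^ 2 * ‖d‖ ^ 2)
        (fderiv ℝ f x d + L * t * ‖d‖ ^ 2) t :=
      ((((hasDerivAt_id' t).mul_const (fderiv ℝ f x d)).const_add (f x)).fun_add
        (((hasDerivAt_pow 2 t).const_mul (L / 2 : ℝ)).mul_const (‖d‖ ^ 2))).congr_deriv
        (by push_cast; ring)
    exact hB.hasDerivWithinAt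

theorem three_point_inequality {g : E → ℝ} {ν : ℝ} {L : ℝ≥0} {z : E} (hf : Differentiable ℝ f)
    (hlip : LipschitzWith L (fderiv ℝ f)) (hfc : StrongConvexOn s μ f)
    (hgc : StrongConvexOn s ν g) (hx : x ∈ s) (hy : y ∈ s) (hz : z ∈ s) (e : E →ₗ[ℝ] ℝ)
    (he : ∀ w ∈ s, g y + e (w - y) ≤ g w) :
    (f y + g y) - (f z + g z) ≤ fderiv ℝ f x (y - z) + e (y - z)
      + (L / 2 * ‖y - x‖ ^ 2 - μ / 2 * ‖x - z‖ ^ 2 - ν / 2 * ‖y - z‖ ^ 2) := by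
  have hdescent := apply_le_add_fderiv_add_of_lipschitzWith_fderiv hf hlip x y
  have hf_lower := hfc.add_fderiv_add_le hx hz (hf x)
  have hg_lower := hgc.add_subgradient_add_le hy hz e he
  have hfderiv : fderiv ℝ f x (y - z) = fderiv ℝ f x (y - x) - fderiv ℝ f x (z - x) := by
    rw [← map_sub, sub_sub_sub_cancel_right]
  have he_neg : e (y - z) = -e (z - y) := by rw [← map_neg, neg_sub]
  rw [norm_sub_rev x z, norm_sub_rev y z]
  linarith

end StrongConvexity

namespace Matrix

variable {m n : Type*} [Fintype m] [Fintype n]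

def frobeniusInner : Matrix m n ℝ →ₗ[ℝ] Matrix m n ℝ →ₗ[ℝ] ℝ :=
  LinearMap.mk₂ ℝ (fun A B ↦ (Aᵀ * B).trace) (by simp [Matrix.add_mul]) (by simp)
    (by simp [Matrix.mul_add]) (by simp)

theorem frobeniusInner_apply (A B : Matrix m n ℝ) : frobeniusInner A B = (Aᵀ * B).trace := rfl

theorem frobeniusInner_comm (A B : Matrix m n ℝ) : frobeniusInner A B = frobeniusInner B A := by
  rw [frobeniusInner_apply, ← trace_transpose, transpose_mul, transpose_transpose]
  rfl

theorem frobeniusInner_self (A : Matrix m n ℝ) : frobeniusInner A A = ‖A‖ ^ 2 := by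
  rw [frobenius_norm_def, ← Real.rpow_natCast, ← Real.rpow_mul (by positivity),
    frobeniusInner_apply, trace, Finset.sum_comm]
  norm_num [mul_apply, sq]

theorem norm_sub_sq_sub_norm_sub_sq (X Y Z : Matrix m n ℝ) :
    ‖X - Z‖ ^ 2 - ‖Y - Z‖ ^ 2 = ‖Y - X‖ ^ 2 - 2 * frobeniusInner (Y - X) (Y - Z) := by
  rw [show X - Z = (Y - Z) - (Y - X) by abel]
  generalize Y - Z = A, Y - X = B
  simp only [← frobeniusInner_self, map_sub, LinearMap.sub_apply, frobeniusInner_comm A B]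
  ring

end Matrix

theorem per_iteration_inequality_general
    (P M : ℕ)
    (f : Fin M → Matrix (Fin P) (Fin P) ℝ → ℝ) (g : Matrix (Fin P) (Fin P) ℝ → ℝ)
    (Mset : Set (Matrix (Fin P) (Fin P) ℝ))
    (μ ν : ℝ)
    (hf : ∀ k, Differentiable ℝ (f k))
    (hfconv : ∀ k, StrongConvexOn Mset μ (f k))
    (L : ℝ≥0) (hlip : ∀ k, LipschitzWith L (@fderiv ℝ _ _ _ _ (PseudoMetricSpace.toUniformSpace.toTopologicalSpace) _ _ _ _ (f k)))
    (hgconv : StrongConvexOn Mset ν g)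
    (ρ : Fin M → ℝ) (hρ : ∀ k, 0 ≤ ρ k) (hρsum : ∑ k, ρ k = 1)
    (ℓ : ℝ) (hℓ : (L : ℝ) < ℓ)
    (Θt Θt1 η : Matrix (Fin P) (Fin P) ℝ) (hΘt : Θt ∈ Mset) (hΘt1 : Θt1 ∈ Mset)
    (Gf : Fin M → Matrix (Fin P) (Fin P) ℝ)
    (hGf : ∀ k, ∀ H : Matrix (Fin P) (Fin P) ℝ,
      fderiv ℝ (f k) Θt H = ((Gf k)ᵀ * H).trace)
    (hη : ∀ Φ ∈ Mset, g Θt1 + (ηᵀ * (Φ - Θt1)).trace ≤ g Φ)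
    (hupdate : -(∑ k, ρ k • (Gf k + η)) = ℓ • (Θt1 - Θt)) :
    ∀ Θ ∈ Mset,
      ∑ k, ρ k * ((f k Θt1 + g Θt1) - (f k Θ + g Θ)) ≤
        ℓ/2 * (‖Θt - Θ‖^2 - ‖Θt1 - Θ‖^2)
          - ν/2 * ‖Θt1 - Θ‖^2 - μ/2 * ‖Θt - Θ‖^2 := by
  intro Θ hΘ
  set C := ℓ / 2 * ‖Θt1 - Θt‖ ^ 2 - μ / 2 * ‖Θt - Θ‖ ^ 2 - ν / 2 * ‖Θt1 - Θ‖ ^ 2 with hC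
  have hk : ∀ k, (f k Θt1 + g Θt1) - (f k Θ + g Θ) ≤ frobeniusInner (Gf k + η) (Θt1 - Θ) + C := by
    intro k
    have h := three_point_inequality (hf k) (hlip k) (hfconv k) hgconv hΘt hΘt1 hΘ
      (frobeniusInner η) hη
    -- `hGf` is stated for `fderiv` with the product topology on matrices, `h` with the norm one
    erw [hGf k, ← frobeniusInner_apply, ← LinearMap.add_apply, ← map_add] at h
    have : (L : ℝ) / 2 * ‖Θt1 - Θt‖ ^ 2 ≤ ℓ / 2 * ‖Θt1 - Θt‖ ^ 2 := by gcongr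
    linarith [hC]
  have hsum : ∑ k, ρ k * frobeniusInner (Gf k + η) (Θt1 - Θ)
      = -ℓ * frobeniusInner (Θt1 - Θt) (Θt1 - Θ) :=
    calc ∑ k, ρ k * frobeniusInner (Gf k + η) (Θt1 - Θ)
        = frobeniusInner (∑ k, ρ k • (Gf k + η)) (Θt1 - Θ) := by
          simp only [map_sum, map_smul, LinearMap.sum_apply, LinearMap.smul_apply, smul_eq_mul]
      _ = frobeniusInner (-(ℓ • (Θt1 - Θt))) (Θt1 - Θ) := by rw [← hupdate, neg_neg]
      _ = -ℓ * frobeniusInner (Θt1 - Θt) (Θt1 - Θ) := by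
          rw [map_neg, map_smul, LinearMap.neg_apply, LinearMap.smul_apply, smul_eq_mul, neg_mul]
  calc ∑ k, ρ k * ((f k Θt1 + g Θt1) - (f k Θ + g Θ))
      ≤ ∑ k, ρ k * (frobeniusInner (Gf k + η) (Θt1 - Θ) + C) :=
        Finset.sum_le_sum fun k _ ↦ mul_le_mul_of_nonneg_left (hk k) (hρ k)
    _ = -ℓ * frobeniusInner (Θt1 - Θt) (Θt1 - Θ) + C := by
        simp only [mul_add, Finset.sum_add_distrib, ← Finset.sum_mul, hρsum, one_mul, hsum]
    _ = _ := by
        rw [norm_sub_sq_sub_norm_sub_sq Θt Θt1 Θ]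
        ring

/-- The key per-iteration inequality. If each `f_k` is `μ`-strongly convex
with `L`-Lipschitz gradient (`G_k = ∇f_k(Θᵗ)` w.r.t. the Frobenius inner product), `g` is
`ν`-strongly convex with subgradient `η ∈ ∂g(Θᵗ⁺¹)`, `ρ` lies in the simplex, `ℓ > L`, and
the update satisfies `-Σ_k ρ_k (G_k + η) = ℓ(Θᵗ⁺¹ - Θᵗ)`, then for all feasible `Θ`:
`Σ_k ρ_k (F_k(Θᵗ⁺¹) - F_k(Θ)) ≤ (ℓ/2)(‖Θᵗ-Θ‖² - ‖Θᵗ⁺¹-Θ‖²) - (ν/2)‖Θᵗ⁺¹-Θ‖²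
  - (μ/2)‖Θᵗ-Θ‖²`, where `F_k = f_k + g`. -/
theorem per_iteration_inequality
    (P M : ℕ)
    (f : Fin M → Matrix (Fin P) (Fin P) ℝ → ℝ) (g : Matrix (Fin P) (Fin P) ℝ → ℝ)
    (Mset : Set (Matrix (Fin P) (Fin P) ℝ))
    (μ ν : ℝ) (hμ : 0 ≤ μ) (hν : 0 ≤ ν)
    (hf : ∀ k, Differentiable ℝ (f k))
    (hfconv : ∀ k, StrongConvexOn Mset μ (f k))
    (L : ℝ≥0) (hlip : ∀ k, LipschitzWith L (@fderiv ℝ _ _ _ _ (PseudoMetricSpace.toUniformSpace.toTopologicalSpace) _ _ _ _ (f k)))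
    (hgconv : StrongConvexOn Mset ν g)
    (ρ : Fin M → ℝ) (hρ : ∀ k, 0 ≤ ρ k) (hρsum : ∑ k, ρ k = 1)
    (ℓ : ℝ) (hℓ : (L : ℝ) < ℓ)
    (Θt Θt1 η : Matrix (Fin P) (Fin P) ℝ) (hΘt : Θt ∈ Mset) (hΘt1 : Θt1 ∈ Mset)
    (Gf : Fin M → Matrix (Fin P) (Fin P) ℝ)
    (hGf : ∀ k, ∀ H : Matrix (Fin P) (Fin P) ℝ,
      fderiv ℝ (f k) Θt H = ((Gf k)ᵀ * H).trace)
    (hη : ∀ Φ ∈ Mset, g Θt1 + (ηᵀ * (Φ - Θt1)).trace ≤ g Φ)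
    (hupdate : -(∑ k, ρ k • (Gf k + η)) = ℓ • (Θt1 - Θt)) :
    ∀ Θ ∈ Mset,
      ∑ k, ρ k * ((f k Θt1 + g Θt1) - (f k Θ + g Θ)) ≤
        ℓ/2 * (‖Θt - Θ‖^2 - ‖Θt1 - Θ‖^2)
          - ν/2 * ‖Θt1 - Θ‖^2 - μ/2 * ‖Θt - Θ‖^2 :=
  per_iteration_inequality_general P M f g Mset μ ν hf hfconv L hlip hgconv ρ hρ hρsum ℓ hℓ Θt Θt1 η
    hΘt hΘt1 Gf hGf hη hupdate
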